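/- arXiv:1108.2538 — 4 statements merged into one kernel-verified Lean document; each statement's English description precedes it below -/
import Mathlib

section
/- Consider a linear cascade (path network) of N single-pole stages with distinct interpretations of rates: let d : Fin N → ℝ with d_i > 0 for all i, and gains f : Fin (N-1) → ℝ. Let A(d) be the N×N real matrix with diagonal entries A_{ii} = −d_i, subdiagonal entries A_{i+1,i} = f_i, and zeros elsewhere; let B = e₁ (first standard basis column vector) and C = e_Nᵀ (last standard basis row vector). Then the steady-state output variance under white-noise input, V(d) = ∫₀^∞ (C e^{A(d)s} B)² ds, is invariant under any permutation of the rates: for every permutation π of Fin N, ∫₀^∞ (C e^{A(d)s} B)² ds = ∫₀^∞ (C e^{A(d∘π)s} B)² ds. -/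
open MeasureTheory Matrix

/-- The `N × N` dynamics matrix of a linear cascade: diagonal entries `-d i`,
subdiagonal entries `A (i+1) i = f i`, zeros elsewhere. -/
noncomputable def cascadeMatrix (N : ℕ) (d : Fin N → ℝ) (f : Fin (N - 1) → ℝ) :
    Matrix (Fin N) (Fin N) ℝ := fun i j =>
  if i = j then -d i
  else if h : (i : ℕ) = (j : ℕ) + 1 then
    f ⟨j, by have hi := i.isLt; have hj := j.isLt; omega⟩
  else 0

/-- The steady-state output variance of a linear cascade under unit white-noise input:
`V(d) = ∫₀^∞ (C e^{A s} B)² ds` where `B = e₁` and `C = e_Nᵀ`, so that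
`C e^{A s} B` is the `(N-1, 0)` entry of the matrix exponential. -/
noncomputable def cascadeVariance (N : ℕ) (hN : 0 < N) (d : Fin N → ℝ)
    (f : Fin (N - 1) → ℝ) : ℝ :=
  ∫ s in Set.Ioi (0 : ℝ),
    ((NormedSpace.exp (s • cascadeMatrix N d f)) ⟨N - 1, by omega⟩ ⟨0, hN⟩) ^ 2

/-!
The generating functions `S j = ∑ₙ (Aⁿ)_{j,0} Xⁿ` of the first column of the powers of the
cascade matrix satisfy `(1 + d₀ X) S 0 = 1` and `(1 + d_j X) S j = f_{j-1} X S (j-1)`, so the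
output series is `S (N-1) = (∏ f) X^(N-1) ∏ᵢ (1 + dᵢ X)⁻¹`, which is symmetric in the rates.
Hence every entry `(Aⁿ)_{N-1,0}`, and with them the impulse response `C e^{As} B`, is unchanged
by permuting `d`, already before squaring and integrating.
-/

open PowerSeries Finset

theorem Matrix.exp_apply_eq_tsum {m 𝕂 : Type*} [Fintype m] [DecidableEq m] [RCLike 𝕂]
    (A : Matrix m m 𝕂) (i j : m) :
    NormedSpace.exp A i j = ∑' k : ℕ, (k.factorial : 𝕂)⁻¹ * (A ^ k) i j := by
  have hsum : Summable fun k : ℕ => (k.factorial : 𝕂)⁻¹ • A ^ k :=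
    open scoped Norms.Operator in NormedSpace.expSeries_summable' A
  rw [congrFun (NormedSpace.exp_eq_tsum 𝕂) A]
  exact (congrFun (tsum_apply hsum) j).trans (tsum_apply (Pi.summable.mp hsum i))

theorem PowerSeries.coeff_zero_of_one_add_C_mul_X_mul_eq {R : Type*} [Semiring R] {a : R}
    {S T : R⟦X⟧} (h : (1 + C a * X) * S = T) : coeff 0 S = coeff 0 T := by
  rw [← h, add_mul, one_mul, map_add, mul_assoc, coeff_C_mul, coeff_zero_X_mul, mul_zero,
    add_zero]

theorem PowerSeries.coeff_succ_of_one_add_C_mul_X_mul_eq {R : Type*} [CommRing R] {a : R}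
    {S T : R⟦X⟧} (h : (1 + C a * X) * S = T) (n : ℕ) :
    coeff (n + 1) S = -a * coeff n S + coeff (n + 1) T := by
  rw [← h, add_mul, one_mul, map_add, mul_assoc, coeff_C_mul, coeff_succ_X_mul]
  ring

theorem PowerSeries.one_add_C_mul_X_mul_inv {k : Type*} [Field k] (a : k) :
    (1 + C a * X) * (1 + C a * X)⁻¹ = 1 :=
  PowerSeries.mul_inv_cancel _ (by simp)

section Cascade

variable {N : ℕ} (d : Fin N → ℝ) (f : Fin (N - 1) → ℝ)

noncomputable def cascadeResponseSeries (j : ℕ) : ℝ⟦X⟧ :=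
  C (∏ k ∈ univ.filter (fun k : Fin (N - 1) => (k : ℕ) < j), f k) * X ^ j *
    ∏ i ∈ univ.filter (fun i : Fin N => (i : ℕ) ≤ j), (1 + C (d i) * X)⁻¹

theorem one_add_mul_cascadeResponseSeries_zero (hN : 0 < N) :
    (1 + C (d ⟨0, hN⟩) * X) * cascadeResponseSeries d f 0 = 1 := by
  have hgain : univ.filter (fun k : Fin (N - 1) => (k : ℕ) < 0) = ∅ := by simp
  have hstages : univ.filter (fun i : Fin N => (i : ℕ) ≤ 0) = {⟨0, hN⟩} := by
    ext i; simp [Fin.ext_iff]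
  rw [cascadeResponseSeries, hgain, hstages, prod_empty, prod_singleton, map_one, pow_zero,
    one_mul, one_mul, one_add_C_mul_X_mul_inv]

theorem one_add_mul_cascadeResponseSeries_succ {j : ℕ} (hj : j + 1 < N) :
    (1 + C (d ⟨j + 1, hj⟩) * X) * cascadeResponseSeries d f (j + 1) =
      C (f ⟨j, by omega⟩) * X * cascadeResponseSeries d f j := by
  have hgain : univ.filter (fun k : Fin (N - 1) => (k : ℕ) < j + 1) =
      insert ⟨j, by omega⟩ (univ.filter (fun k : Fin (N - 1) => (k : ℕ) < j)) := by
    ext k; simp [Fin.ext_iff]; omega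
  have hstages : univ.filter (fun i : Fin N => (i : ℕ) ≤ j + 1) =
      insert ⟨j + 1, hj⟩ (univ.filter (fun i : Fin N => (i : ℕ) ≤ j)) := by
    ext i; simp [Fin.ext_iff]; omega
  rw [cascadeResponseSeries, cascadeResponseSeries, hgain, hstages, prod_insert (by simp),
    prod_insert (by simp), map_mul, pow_succ]
  set gain := ∏ k ∈ univ.filter (fun k : Fin (N - 1) => (k : ℕ) < j), f k
  set transfer := ∏ i ∈ univ.filter (fun i : Fin N => (i : ℕ) ≤ j), (1 + C (d i) * X)⁻¹
  linear_combination C (f ⟨j, by omega⟩) * C gain * X ^ j * X * transfer *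
    one_add_C_mul_X_mul_inv (d ⟨j + 1, hj⟩)

theorem cascadeMatrix_mul_apply_zero (hN : 0 < N) (M : Matrix (Fin N) (Fin N) ℝ) (k : Fin N) :
    (cascadeMatrix N d f * M) ⟨0, hN⟩ k = -d ⟨0, hN⟩ * M ⟨0, hN⟩ k := by
  rw [Matrix.mul_apply, Fintype.sum_eq_single ⟨0, hN⟩]
  · simp [cascadeMatrix]
  · intro l hl
    simp [cascadeMatrix, Ne.symm hl]

theorem cascadeMatrix_mul_apply_succ {j : ℕ} (hj : j + 1 < N) (M : Matrix (Fin N) (Fin N) ℝ)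
    (k : Fin N) :
    (cascadeMatrix N d f * M) ⟨j + 1, hj⟩ k =
      -d ⟨j + 1, hj⟩ * M ⟨j + 1, hj⟩ k + f ⟨j, by omega⟩ * M ⟨j, by omega⟩ k := by
  rw [Matrix.mul_apply, Fintype.sum_eq_add ⟨j + 1, hj⟩ ⟨j, by omega⟩ (by simp [Fin.ext_iff])]
  · simp [cascadeMatrix]
  · rintro l ⟨hl₁, hl₂⟩
    simp [cascadeMatrix, Ne.symm hl₁, Fin.ext_iff.not.mp (Ne.symm hl₂)]

theorem cascadeMatrix_pow_apply_zero (hN : 0 < N) (n j : ℕ) (hj : j < N) :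
    (cascadeMatrix N d f ^ n) ⟨j, hj⟩ ⟨0, hN⟩ = coeff n (cascadeResponseSeries d f j) := by
  induction n generalizing j with
  | zero =>
    cases j with
    | zero =>
      rw [pow_zero, Matrix.one_apply_eq,
        coeff_zero_of_one_add_C_mul_X_mul_eq (one_add_mul_cascadeResponseSeries_zero d f hN),
        coeff_zero_one]
    | succ j =>
      rw [pow_zero, Matrix.one_apply_ne (by simp [Fin.ext_iff]),
        coeff_zero_of_one_add_C_mul_X_mul_eq (one_add_mul_cascadeResponseSeries_succ d f hj),
        mul_assoc, coeff_C_mul, coeff_zero_X_mul, mul_zero]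
  | succ n ih =>
    cases j with
    | zero =>
      rw [pow_succ', cascadeMatrix_mul_apply_zero, ih,
        coeff_succ_of_one_add_C_mul_X_mul_eq (one_add_mul_cascadeResponseSeries_zero d f hN),
        coeff_one, if_neg n.succ_ne_zero, add_zero]
    | succ j =>
      rw [pow_succ', cascadeMatrix_mul_apply_succ, ih, ih,
        coeff_succ_of_one_add_C_mul_X_mul_eq (one_add_mul_cascadeResponseSeries_succ d f hj),
        mul_assoc, coeff_C_mul, coeff_succ_X_mul]

theorem cascadeResponseSeries_last :
    cascadeResponseSeries d f (N - 1) =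
      C (∏ k, f k) * X ^ (N - 1) * ∏ i, (1 + C (d i) * X)⁻¹ := by
  rw [cascadeResponseSeries, filter_true_of_mem (fun k _ => k.isLt),
    filter_true_of_mem (fun i _ => Nat.le_sub_one_of_lt i.isLt)]

theorem cascadeMatrix_comp_perm_pow_apply (hN : 0 < N) (π : Equiv.Perm (Fin N)) (n : ℕ) :
    (cascadeMatrix N (d ∘ π) f ^ n) ⟨N - 1, by omega⟩ ⟨0, hN⟩ =
      (cascadeMatrix N d f ^ n) ⟨N - 1, by omega⟩ ⟨0, hN⟩ := by
  rw [cascadeMatrix_pow_apply_zero, cascadeMatrix_pow_apply_zero, cascadeResponseSeries_last,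
    cascadeResponseSeries_last, Function.comp_def,
    Equiv.prod_comp π (fun i => (1 + C (d i) * X)⁻¹)]

end Cascade

theorem cascade_variance_perm_invariant_general (N : ℕ) (hN : 0 < N) (d : Fin N → ℝ)
    (f : Fin (N - 1) → ℝ) (π : Equiv.Perm (Fin N)) :
    cascadeVariance N hN d f = cascadeVariance N hN (d ∘ π) f := by
  refine setIntegral_congr_fun measurableSet_Ioi fun s _ => ?_
  simp only [Matrix.exp_apply_eq_tsum, smul_pow, Matrix.smul_apply, smul_eq_mul,
    cascadeMatrix_comp_perm_pow_apply]

/-- The noise response (steady-state output variance) of a linear pathway is independent of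
the relative position of its nodes: permuting the rates `d` does not change the variance. -/
theorem cascade_variance_perm_invariant (N : ℕ) (hN : 0 < N) (d : Fin N → ℝ)
    (hd : ∀ i, 0 < d i) (f : Fin (N - 1) → ℝ) (π : Equiv.Perm (Fin N)) :
    cascadeVariance N hN d f = cascadeVariance N hN (d ∘ π) f :=
  cascade_variance_perm_invariant_general N hN d f π
end

section
/- Let N ≥ 2, let d₁, …, d_N be positive pairwise distinct reals, and fix two distinct indices x ≠ y. For indices k, m define T_{k,m} = 1 / ( (d_k + d_m) ∏_{a ≠ k} (d_k − d_a) ∏_{b ≠ m} (d_m − d_b) ), and set P_x = ∏_{s ≠ x, y} (d_x − d_s) and P_y = ∏_{s ≠ x, y} (d_y − d_s). Then T_{x,x} + T_{x,y} + T_{y,x} + T_{y,y} = ( (d_x P_x − d_y P_y)² + d_x d_y (P_x − P_y)² ) / ( 2 d_x d_y (d_x + d_y) (d_x − d_y)² P_x² P_y² ). In particular the numerator of this rational expression in (d_x − d_y) vanishes to second order at d_x = d_y, so the sum is bounded as d_y → d_x. -/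
open Finset

/-! Splitting off the factor `d_x - d_y` (resp. `d_y - d_x`) from the two products in each
`T_{k,m}` with `k, m ∈ {x, y}` leaves only `P_x` and `P_y`, so the four terms become a rational
function of `d_x, d_y, P_x, P_y` alone, and the identity is checked by clearing denominators. -/

theorem prod_sub_ne_zero_of_notMem {ι R : Type*} [CommRing R] [IsDomain R] {d : ι → R}
    (hd : Function.Injective d) {s : Finset ι} {i : ι} (hi : i ∉ s) :
    ∏ j ∈ s, (d i - d j) ≠ 0 :=
  prod_ne_zero_iff.mpr fun _ hj => sub_ne_zero.mpr <| hd.ne (ne_of_mem_of_not_mem hj hi).symm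

theorem one_div_add_four_cross_terms {K : Type*} [Field K] {a b P Q : K} (h2 : (2 : K) ≠ 0)
    (ha : a ≠ 0) (hb : b ≠ 0) (hab : a + b ≠ 0) (hne : a ≠ b) (hP : P ≠ 0) (hQ : Q ≠ 0) :
    1 / ((a + a) * ((a - b) * P) * ((a - b) * P)) +
        1 / ((a + b) * ((a - b) * P) * ((b - a) * Q)) +
        1 / ((b + a) * ((b - a) * Q) * ((a - b) * P)) +
        1 / ((b + b) * ((b - a) * Q) * ((b - a) * Q)) =
      ((a * P - b * Q) ^ 2 + a * b * (P - Q) ^ 2) /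
        (2 * a * b * (a + b) * (a - b) ^ 2 * P ^ 2 * Q ^ 2) := by
  have hsub : a - b ≠ 0 := sub_ne_zero.mpr hne
  have hsub' : b - a ≠ 0 := sub_ne_zero.mpr hne.symm
  have hba : b + a ≠ 0 := by rwa [add_comm]
  rw [← two_mul, ← two_mul]
  field_simp
  ring

theorem partial_fraction_sum_identity_general (N : ℕ) (d : Fin N → ℝ)
    (hd : ∀ i, 0 < d i) (hdist : Function.Injective d) (x y : Fin N) (hxy : x ≠ y)
    (T : Fin N → Fin N → ℝ)
    (hT : ∀ k m, T k m = 1 / ((d k + d m) * (∏ a ∈ univ.erase k, (d k - d a)) *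
      (∏ b ∈ univ.erase m, (d m - d b))))
    (Px Py : ℝ)
    (hPx : Px = ∏ s ∈ (univ.erase x).erase y, (d x - d s))
    (hPy : Py = ∏ s ∈ (univ.erase x).erase y, (d y - d s)) :
    T x x + T x y + T y x + T y y =
      ((d x * Px - d y * Py) ^ 2 + d x * d y * (Px - Py) ^ 2) /
        (2 * d x * d y * (d x + d y) * (d x - d y) ^ 2 * Px ^ 2 * Py ^ 2) := by
  have hprodx : ∏ a ∈ univ.erase x, (d x - d a) = (d x - d y) * Px := by
    rw [hPx]
    exact (mul_prod_erase _ _ (mem_erase.mpr ⟨hxy.symm, mem_univ y⟩)).symm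
  have hprody : ∏ b ∈ univ.erase y, (d y - d b) = (d y - d x) * Py := by
    rw [hPy, erase_right_comm]
    exact (mul_prod_erase _ _ (mem_erase.mpr ⟨hxy, mem_univ x⟩)).symm
  have hPx0 : Px ≠ 0 := hPx ▸ prod_sub_ne_zero_of_notMem hdist (by simp)
  have hPy0 : Py ≠ 0 := hPy ▸ prod_sub_ne_zero_of_notMem hdist (notMem_erase y _)
  simp only [hT, hprodx, hprody]
  exact one_div_add_four_cross_terms two_ne_zero (hd x).ne' (hd y).ne'
    (add_pos (hd x) (hd y)).ne' (hdist.ne hxy) hPx0 hPy0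

/-- The sum `T_{x,x} + T_{x,y} + T_{y,x} + T_{y,y}` of the partial-fraction terms
`T_{k,m} = 1/((d_k + d_m) ∏_{a≠k}(d_k − d_a) ∏_{b≠m}(d_m − d_b))` equals
`((d_x P_x − d_y P_y)² + d_x d_y (P_x − P_y)²) / (2 d_x d_y (d_x + d_y) (d_x − d_y)² P_x² P_y²)`,
where `P_x = ∏_{s≠x,y}(d_x − d_s)` and `P_y = ∏_{s≠x,y}(d_y − d_s)`; in particular the
numerator vanishes to second order at `d_x = d_y`. -/
theorem partial_fraction_sum_identity (N : ℕ) (hN : 2 ≤ N) (d : Fin N → ℝ)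
    (hd : ∀ i, 0 < d i) (hdist : Function.Injective d) (x y : Fin N) (hxy : x ≠ y)
    (T : Fin N → Fin N → ℝ)
    (hT : ∀ k m, T k m = 1 / ((d k + d m) * (∏ a ∈ univ.erase k, (d k - d a)) *
      (∏ b ∈ univ.erase m, (d m - d b))))
    (Px Py : ℝ)
    (hPx : Px = ∏ s ∈ (univ.erase x).erase y, (d x - d s))
    (hPy : Py = ∏ s ∈ (univ.erase x).erase y, (d y - d s)) :
    T x x + T x y + T y x + T y y =
      ((d x * Px - d y * Py) ^ 2 + d x * d y * (Px - Py) ^ 2) /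
        (2 * d x * d y * (d x + d y) * (d x - d y) ^ 2 * Px ^ 2 * Py ^ 2) :=
  partial_fraction_sum_identity_general N d hd hdist x y hxy T hT Px Py hPx hPy
end

section
/- Let W be a standard Brownian motion, let n ≥ 1, let 0 = t₀ ≤ t₁ ≤ t₂ ≤ … ≤ t_n be reals, and let σ₁, …, σ_n be positive reals. Then E[ ∏_{k=1}^{n} e^{σ_k W_{t_k}} ] = exp( (1/2) Σ_{k=1}^{n} ( Σ_{m=k}^{n} σ_m )² (t_k − t_{k−1}) ). -/
/-! Summing `σ k * W_{t_k}` by parts turns the exponent into `∑ c_i (W_{t_i} - W_{t_{i-1}})` with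
`c_i = ∑_{m ≥ i} σ_m`. The increments are independent centred Gaussians of variance
`t_i - t_{i-1}`, so the expectation factors into Gaussian moment generating functions
`exp (c_i² (t_i - t_{i-1}) / 2)`. -/

open MeasureTheory ProbabilityTheory Filter Real

/-- `W` is a standard Brownian motion on the probability space `Ω`: each `W t` is
measurable, `W 0 = 0` almost surely, `W` has independent increments, the increment
`W t − W s` (for `0 ≤ s ≤ t`) is Gaussian with mean `0` and variance `t − s`, and the
sample paths are almost surely continuous. -/
def IsStdBrownianMotion {Ω : Type*} [MeasureSpace Ω] (W : ℝ → Ω → ℝ) : Prop :=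
  (∀ t, Measurable (W t)) ∧
  (∀ᵐ ω, W 0 ω = 0) ∧
  (∀ (n : ℕ) (t : Fin (n + 1) → ℝ), Monotone t →
      iIndepFun
        (fun i : Fin n => fun ω => W (t i.succ) ω - W (t i.castSucc) ω) ℙ) ∧
  (∀ s t : ℝ, 0 ≤ s → s ≤ t →
      Measure.map (fun ω => W t ω - W s ω) ℙ = gaussianReal 0 (Real.toNNReal (t - s))) ∧
  (∀ᵐ ω, Continuous fun t => W t ω)

lemma Fin.sum_mul_succ_eq_sum_sum_Ici_mul_sub {R : Type*} [CommRing R] {n : ℕ}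
    (σ : Fin n → R) (f : Fin (n + 1) → R) (hf : f 0 = 0) :
    ∑ k, σ k * f k.succ = ∑ i, (∑ m ∈ Finset.Ici i, σ m) * (f i.succ - f i.castSucc) := by
  calc ∑ k, σ k * f k.succ
      = ∑ k, ∑ i ∈ Finset.Iic k, σ k * (f i.succ - f i.castSucc) := by
        simp_rw [← Finset.mul_sum, Fin.sum_Iic_sub, hf, sub_zero]
    _ = ∑ i, ∑ k ∈ Finset.Ici i, σ k * (f i.succ - f i.castSucc) :=
        Finset.sum_comm' fun k i => by simp
    _ = ∑ i, (∑ m ∈ Finset.Ici i, σ m) * (f i.succ - f i.castSucc) := by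
        simp_rw [Finset.sum_mul]

lemma ProbabilityTheory.iIndepFun.integral_exp_sum_mul {Ω ι : Type*} [MeasurableSpace Ω]
    [Fintype ι] {μ : Measure Ω} {X : ι → Ω → ℝ} (hX : iIndepFun X μ)
    (hmeas : ∀ i, Measurable (X i)) (c : ι → ℝ) :
    ∫ ω, exp (∑ i, c i * X i ω) ∂μ = ∏ i, mgf (X i) μ (c i) := by
  have hY : iIndepFun (fun i ω => c i * X i ω) μ :=
    hX.comp (fun i x => c i * x) fun i => measurable_const_mul _
  have hsum := hY.mgf_sum (t := 1) (fun i => (hmeas i).const_mul _) Finset.univ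
  simp only [mgf_const_mul, mul_one] at hsum
  rw [← hsum, mgf]
  simp [Finset.sum_apply]

namespace IsStdBrownianMotion

variable {Ω : Type*} [MeasureSpace Ω] {W : ℝ → Ω → ℝ}

lemma mgf_sub (hW : IsStdBrownianMotion W) {s t : ℝ} (hs : 0 ≤ s) (hst : s ≤ t) (c : ℝ) :
    mgf (fun ω => W t ω - W s ω) ℙ c = exp (c ^ 2 * (t - s) / 2) := by
  rw [mgf_gaussianReal (hW.2.2.2.1 s t hs hst), Real.coe_toNNReal _ (sub_nonneg.2 hst)]
  ring_nf

lemma integral_exp_sum_mul_sub {n : ℕ} (hW : IsStdBrownianMotion W) (t : Fin (n + 1) → ℝ)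
    (ht0 : 0 ≤ t 0) (hmono : Monotone t) (c : Fin n → ℝ) :
    ∫ ω, exp (∑ i, c i * (W (t i.succ) ω - W (t i.castSucc) ω)) =
      ∏ i, exp (c i ^ 2 * (t i.succ - t i.castSucc) / 2) := by
  rw [(hW.2.2.1 n t hmono).integral_exp_sum_mul (fun i => (hW.1 _).sub (hW.1 _)) c]
  exact Finset.prod_congr rfl fun i _ =>
    hW.mgf_sub (ht0.trans (hmono (Fin.zero_le _))) (hmono (Fin.castSucc_le_succ i)) (c i)

end IsStdBrownianMotion

theorem integral_prod_exp_brownian_general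
    {Ω : Type*} [MeasureSpace Ω]
    (W : ℝ → Ω → ℝ) (hW : IsStdBrownianMotion W)
    (n : ℕ) (t : Fin (n + 1) → ℝ) (ht0 : t 0 = 0) (hmono : Monotone t)
    (σ : Fin n → ℝ) :
    (∫ ω, ∏ k : Fin n, Real.exp (σ k * W (t k.succ) ω)) =
      Real.exp ((1 / 2) * ∑ k : Fin n,
        (∑ m ∈ Finset.Ici k, σ m) ^ 2 * (t k.succ - t k.castSucc)) := by
  have hsum_by_parts : ∀ᵐ ω, ∏ k : Fin n, exp (σ k * W (t k.succ) ω) =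
      exp (∑ i, (∑ m ∈ Finset.Ici i, σ m) * (W (t i.succ) ω - W (t i.castSucc) ω)) := by
    filter_upwards [hW.2.1] with ω hω
    rw [← exp_sum, Fin.sum_mul_succ_eq_sum_sum_Ici_mul_sub σ (fun j => W (t j) ω) (by simp [ht0, hω])]
  rw [integral_congr_ae hsum_by_parts, hW.integral_exp_sum_mul_sub t ht0.ge hmono, ← exp_sum,
    Finset.mul_sum]
  exact congrArg exp (Finset.sum_congr rfl fun k _ => by ring)

/-- Expectation of a product of exponentials of Brownian motion at ordered times
`0 = t₀ ≤ t₁ ≤ … ≤ t_n` with positive weights `σ₁, …, σ_n`: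
`E[∏_{k=1}^n e^{σ_k W_{t_k}}] = exp((1/2) Σ_{k=1}^n (Σ_{m=k}^n σ_m)² (t_k − t_{k−1}))`. -/
theorem integral_prod_exp_brownian
    {Ω : Type*} [MeasureSpace Ω] [IsProbabilityMeasure (ℙ : Measure Ω)]
    (W : ℝ → Ω → ℝ) (hW : IsStdBrownianMotion W)
    (n : ℕ) (hn : 1 ≤ n) (t : Fin (n + 1) → ℝ) (ht0 : t 0 = 0) (hmono : Monotone t)
    (σ : Fin n → ℝ) (hσ : ∀ k, 0 < σ k) :
    (∫ ω, ∏ k : Fin n, Real.exp (σ k * W (t k.succ) ω)) =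
      Real.exp ((1 / 2) * ∑ k : Fin n,
        (∑ m ∈ Finset.Ici k, σ m) ^ 2 * (t k.succ - t k.castSucc)) :=
  integral_prod_exp_brownian_general W hW n t ht0 hmono σ
end

section
/- Let W be a standard Brownian motion, let b, σ > 0 and a > σ²/2, and define Y(t) = b ∫₀^t e^{−(a + σ²/2) u} e^{σ W_u} du. Then the steady-state second moment exists and equals lim_{t→∞} E[Y(t)²] = b² / ( a (a − σ²/2) ). -/
/-!
Expanding the square and exchanging expectation and time integrals (Tonelli, after replacing `W`
by a modification with continuous paths everywhere) gives
`E[Y(t)²] = b² ∫∫_{(0,t]²} e^{-(a+σ²/2)(u+v)} E[e^{σW_u} e^{σW_v}] du dv`.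
For `u ≤ v`, `W_u + W_v = 2 W_u + (W_v - W_u)` is a sum of independent centred Gaussians, so the
expectation is `e^{σ²(u+v)/2 + σ² min(u,v)}` and the integrand is `e^{-a(u+v) + σ² min(u,v)}`.
By monotone convergence the limit is the integral over the open quadrant, which splits along the
diagonal into two copies of `∫₀^∞ e^{(σ²-2a)x}/a dx = 1/(a(2a - σ²))`.
-/

open MeasureTheory ProbabilityTheory Filter Real

open Set Function
open scoped ENNReal NNReal

lemma lintegral_Ioi_lintegral_Ioc_swap {f : ℝ → ℝ → ℝ≥0∞} (hf : Measurable (uncurry f)) (c : ℝ) :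
    ∫⁻ u in Ioi c, ∫⁻ v in Ioc c u, f u v = ∫⁻ v in Ioi c, ∫⁻ u in Ici v, f u v := by
  set T : Set (ℝ × ℝ) := {p | c < p.2 ∧ p.2 ≤ p.1}
  have hT : MeasurableSet T :=
    (measurableSet_lt measurable_const measurable_snd).inter
      (measurableSet_le measurable_snd measurable_fst)
  set g : ℝ → ℝ → ℝ≥0∞ := fun u v => T.indicator (uncurry f) (u, v)
  have hsection : ∀ u, ∫⁻ v in Ioc c u, f u v = ∫⁻ v, g u v := fun u => by
    rw [← lintegral_indicator measurableSet_Ioc]; rfl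
  have hsection_swap : ∀ v ∈ Ioi c, ∫⁻ u in Ici v, f u v = ∫⁻ u, g u v := fun v hv => by
    rw [← lintegral_indicator measurableSet_Ici]
    congr 1 with u
    simp [g, T, indicator, mem_Ioi.mp hv]
  calc ∫⁻ u in Ioi c, ∫⁻ v in Ioc c u, f u v
      = ∫⁻ u, ∫⁻ v, g u v := by
        simp_rw [hsection]
        refine setLIntegral_eq_of_support_subset fun u hu => by_contra fun hcu => hu ?_
        have hg : ∀ v, g u v = 0 := fun v => indicator_of_notMem (fun h => hcu (h.1.trans_le h.2)) _
        simp [hg]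
    _ = ∫⁻ v, ∫⁻ u, g u v := lintegral_lintegral_swap (hf.indicator hT).aemeasurable
    _ = ∫⁻ v in Ioi c, ∫⁻ u, g u v := by
        refine (setLIntegral_eq_of_support_subset fun v hv => by_contra fun hcv => hv ?_).symm
        have hg : ∀ u, g u v = 0 := fun u => indicator_of_notMem (fun h => hcv h.1) _
        simp [hg]
    _ = ∫⁻ v in Ioi c, ∫⁻ u in Ici v, f u v :=
        (setLIntegral_congr_fun measurableSet_Ioi fun v hv => (hsection_swap v hv).symm)

lemma tendsto_setLIntegral_iUnion_of_monotone {α ι : Type*} [MeasurableSpace α] {μ : Measure α}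
    [SFinite μ] [Preorder ι] [IsCountablyGenerated (atTop : Filter ι)] {s : ι → Set α}
    (hs : Monotone s) (f : α → ℝ≥0∞) :
    Tendsto (fun i => ∫⁻ x in s i, f x ∂μ) atTop (nhds (∫⁻ x in ⋃ i, s i, f x ∂μ)) := by
  simpa only [comp_def, withDensity_apply'] using
    tendsto_measure_iUnion_atTop (μ := μ.withDensity f) hs

lemma iUnion_Ioc_prod_Ioc (c : ℝ) : ⋃ t : ℝ, Ioc c t ×ˢ Ioc c t = Ioi c ×ˢ Ioi c := by
  ext ⟨u, v⟩
  simp only [mem_iUnion, mem_prod, mem_Ioc, mem_Ioi]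
  constructor
  · rintro ⟨t, ⟨hu, -⟩, hv, -⟩
    exact ⟨hu, hv⟩
  · rintro ⟨hu, hv⟩
    exact ⟨max u v, ⟨hu, le_max_left u v⟩, hv, le_max_right u v⟩

lemma integral_sq_integral_eq_toReal_lintegral {α Ω : Type*} [MeasurableSpace α]
    [MeasurableSpace Ω] {μ : Measure α} [SFinite μ] {P : Measure Ω} [SFinite P]
    {f : α → Ω → ℝ} (hf : Measurable (uncurry f)) (hf0 : ∀ x ω, 0 ≤ f x ω)
    (hfi : ∀ ω, Integrable (fun x => f x ω) μ) :
    ∫ ω, (∫ x, f x ω ∂μ) ^ 2 ∂P =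
      (∫⁻ p, ∫⁻ ω, ENNReal.ofReal (f p.1 ω * f p.2 ω) ∂P ∂μ.prod μ).toReal := by
  have hsq : ∀ ω, ENNReal.ofReal ((∫ x, f x ω ∂μ) ^ 2) =
      ∫⁻ p, ENNReal.ofReal (f p.1 ω * f p.2 ω) ∂μ.prod μ := fun ω => by
    have hfω : AEMeasurable (fun x => ENNReal.ofReal (f x ω)) μ := by fun_prop
    rw [sq, ENNReal.ofReal_mul (integral_nonneg (hf0 · ω)),
      ofReal_integral_eq_lintegral_ofReal (hfi ω) (ae_of_all _ (hf0 · ω)),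
      ← lintegral_prod_mul hfω hfω]
    simp_rw [ENNReal.ofReal_mul (hf0 _ ω)]
  rw [integral_eq_lintegral_of_nonneg_ae (ae_of_all _ fun ω => sq_nonneg _)
    ((hf.stronglyMeasurable.integral_prod_left).pow 2).aestronglyMeasurable,
    lintegral_congr hsq, lintegral_lintegral_swap (by fun_prop)]

lemma exists_continuous_modification {T Ω E : Type*} [TopologicalSpace T] [MeasurableSpace Ω]
    [TopologicalSpace E] [MeasurableSpace E] [Zero E] {μ : Measure Ω} {W : T → Ω → E}
    (hmeas : ∀ t, Measurable (W t)) (hcont : ∀ᵐ ω ∂μ, Continuous fun t => W t ω) :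
    ∃ W' : T → Ω → E, (∀ t, Measurable (W' t)) ∧ (∀ ω, Continuous fun t => W' t ω) ∧
      ∀ᵐ ω ∂μ, ∀ t, W' t ω = W t ω := by
  set N := toMeasurable μ {ω | ¬Continuous fun t => W t ω}
  have hN : μ N = 0 := by rw [measure_toMeasurable]; exact ae_iff.mp hcont
  refine ⟨fun t => Nᶜ.indicator (W t),
    fun t => (hmeas t).indicator (measurableSet_toMeasurable _ _).compl, fun ω => ?_, ?_⟩
  · by_cases hω : ω ∈ N
    · simp only [indicator_of_notMem (fun h : ω ∈ Nᶜ => h hω)]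
      exact continuous_const
    · simp only [indicator_of_mem (mem_compl hω)]
      exact not_not.mp fun h => hω (subset_toMeasurable _ _ h)
  · filter_upwards [compl_mem_ae_iff.mpr hN] with ω hω t
    exact indicator_of_mem hω _

lemma lintegral_Ioi_ofReal_exp_mul {c : ℝ} (hc : c < 0) (w : ℝ) :
    ∫⁻ x in Ioi w, ENNReal.ofReal (exp (c * x)) = ENNReal.ofReal (-exp (c * w) / c) := by
  rw [← ofReal_integral_eq_lintegral_ofReal (integrableOn_exp_mul_Ioi hc w)
    (ae_of_all _ fun _ => (exp_pos _).le), integral_exp_mul_Ioi hc]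

noncomputable def secondMomentKernel (a σ : ℝ) (p : ℝ × ℝ) : ℝ :=
  exp (-a * (p.1 + p.2) + σ ^ 2 * min p.1 p.2)

lemma lintegral_Ioi_ofReal_exp_mul_sub_mul_add {a : ℝ} (ha : 0 < a) (s x : ℝ) :
    ∫⁻ y in Ioi x, ENNReal.ofReal (exp (s * x - a * (x + y))) =
      ENNReal.ofReal (exp ((s - 2 * a) * x) / a) := by
  have hsplit : ∀ y, ENNReal.ofReal (exp (s * x - a * (x + y))) =
      ENNReal.ofReal (exp ((s - a) * x)) * ENNReal.ofReal (exp (-a * y)) := fun y => by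
    rw [← ENNReal.ofReal_mul (exp_pos _).le, ← exp_add]; ring_nf
  simp_rw [hsplit]
  rw [lintegral_const_mul' _ _ ENNReal.ofReal_ne_top, lintegral_Ioi_ofReal_exp_mul (by linarith),
    ← ENNReal.ofReal_mul (exp_pos _).le, neg_div_neg_eq, ← mul_div_assoc, ← exp_add]
  ring_nf

lemma lintegral_Ioi_zero_ofReal_exp_mul_div {c : ℝ} (hc : c < 0) (a : ℝ) :
    ∫⁻ x in Ioi 0, ENNReal.ofReal (exp (c * x) / a) = ENNReal.ofReal (-(c * a)⁻¹) := by
  simp_rw [div_eq_mul_inv, ENNReal.ofReal_mul (exp_pos _).le]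
  rw [lintegral_mul_const' _ _ ENNReal.ofReal_ne_top, lintegral_Ioi_ofReal_exp_mul hc,
    ← ENNReal.ofReal_mul (div_nonneg_of_nonpos (neg_nonpos.mpr (exp_pos _).le) hc.le),
    mul_zero, exp_zero]
  ring_nf

lemma lintegral_secondMomentKernel {a σ : ℝ} (ha : σ ^ 2 / 2 < a) :
    ∫⁻ p in Ioi 0 ×ˢ Ioi 0, ENNReal.ofReal (secondMomentKernel a σ p) =
      ENNReal.ofReal ((a * (a - σ ^ 2 / 2))⁻¹) := by
  have ha0 : 0 < a := lt_of_le_of_lt (by positivity : (0 : ℝ) ≤ σ ^ 2 / 2) ha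
  have hsplit : ∀ u ∈ Ioi (0 : ℝ), ∫⁻ v in Ioi 0, ENNReal.ofReal (secondMomentKernel a σ (u, v)) =
      (∫⁻ v in Ioc 0 u, ENNReal.ofReal (exp (σ ^ 2 * v - a * (v + u)))) +
        ENNReal.ofReal (exp ((σ ^ 2 - 2 * a) * u) / a) := fun u hu => by
    rw [← Ioc_union_Ioi_eq_Ioi hu.le,
      lintegral_union measurableSet_Ioi Ioc_disjoint_Ioi_same,
      ← lintegral_Ioi_ofReal_exp_mul_sub_mul_add ha0]
    congr 1
    · refine setLIntegral_congr_fun measurableSet_Ioc fun v hv => ?_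
      rw [secondMomentKernel, min_eq_right hv.2]; ring_nf
    · refine setLIntegral_congr_fun measurableSet_Ioi fun v hv => ?_
      rw [secondMomentKernel, min_eq_left hv.le]; ring_nf
  rw [Measure.volume_eq_prod, setLIntegral_prod _ (by unfold secondMomentKernel; fun_prop),
    setLIntegral_congr_fun measurableSet_Ioi hsplit, lintegral_add_right _ (by fun_prop),
    lintegral_Ioi_lintegral_Ioc_swap (by fun_prop)]
  have hIci : ∀ v : ℝ, ∫⁻ u in Ici v, ENNReal.ofReal (exp (σ ^ 2 * v - a * (v + u))) =
      ∫⁻ u in Ioi v, ENNReal.ofReal (exp (σ ^ 2 * v - a * (v + u))) :=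
    fun v => setLIntegral_congr Ioi_ae_eq_Ici.symm
  have hc : σ ^ 2 - 2 * a < 0 := by linarith
  have hJ : 0 ≤ -((σ ^ 2 - 2 * a) * a)⁻¹ :=
    neg_nonneg.mpr (inv_nonpos.mpr (mul_neg_of_neg_of_pos hc ha0).le)
  simp_rw [hIci, lintegral_Ioi_ofReal_exp_mul_sub_mul_add ha0,
    lintegral_Ioi_zero_ofReal_exp_mul_div hc]
  rw [← ENNReal.ofReal_add hJ hJ]
  have : 2 * a - σ ^ 2 ≠ 0 := by linarith
  congr 1
  field_simp [hc.ne]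
  ring

lemma lintegral_ofReal_exp_mul_of_map_eq_gaussianReal {Ω : Type*} [MeasurableSpace Ω]
    {P : Measure Ω} [NeZero P] {X : Ω → ℝ} {μ : ℝ} {v : ℝ≥0}
    (hX : P.map X = gaussianReal μ v) (c : ℝ) :
    ∫⁻ ω, ENNReal.ofReal (exp (c * X ω)) ∂P = ENNReal.ofReal (exp (μ * c + v * c ^ 2 / 2)) := by
  have hint : Integrable (fun ω => exp (c * X ω)) P := by
    rw [← mgf_pos_iff, mgf_gaussianReal hX]; exact exp_pos _
  rw [← mgf_gaussianReal hX, mgf, ← ofReal_integral_eq_lintegral_ofReal hint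
    (ae_of_all _ fun _ => (exp_pos _).le)]

section BrownianMotion

variable {Ω : Type*} [MeasureSpace Ω] [IsProbabilityMeasure (ℙ : Measure Ω)] {W : ℝ → Ω → ℝ}

lemma IsStdBrownianMotion.lintegral_exp_mul_exp_of_le (hW : IsStdBrownianMotion W) (σ : ℝ)
    {u v : ℝ} (hu : 0 ≤ u) (huv : u ≤ v) :
    ∫⁻ ω, ENNReal.ofReal (exp (σ * W u ω) * exp (σ * W v ω)) =
      ENNReal.ofReal (exp (σ ^ 2 * (u + v) / 2 + σ ^ 2 * u)) := by
  obtain ⟨hmeas, hW0, hindep, hlaw, -⟩ := hW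
  set X := fun ω => W u ω - W 0 ω
  set Z := fun ω => W v ω - W u ω
  have hXZ : IndepFun X Z := by
    have hmono : Monotone ![0, u, v] := by
      rw [Fin.monotone_iff_le_succ]
      intro i
      fin_cases i <;> simp [hu, huv]
    simpa using (hindep 2 ![0, u, v] hmono).indepFun (i := 0) (j := 1) (by decide)
  have hprod : (fun ω => ENNReal.ofReal (exp (σ * W u ω) * exp (σ * W v ω))) =ᵐ[ℙ]
      (fun ω => ENNReal.ofReal (exp ((2 * σ) * X ω))) *
        fun ω => ENNReal.ofReal (exp (σ * Z ω)) := by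
    filter_upwards [hW0] with ω hω
    simp only [Pi.mul_apply, X, Z, hω, sub_zero]
    rw [← ENNReal.ofReal_mul (exp_pos _).le, ← exp_add, ← exp_add]
    ring_nf
  have hind : IndepFun (fun ω => ENNReal.ofReal (exp ((2 * σ) * X ω)))
      (fun ω => ENNReal.ofReal (exp (σ * Z ω))) :=
    hXZ.comp (φ := fun x => ENNReal.ofReal (exp ((2 * σ) * x)))
      (ψ := fun x => ENNReal.ofReal (exp (σ * x))) (by fun_prop) (by fun_prop)
  rw [lintegral_congr_ae hprod,
    lintegral_mul_eq_lintegral_mul_lintegral_of_indepFun (by fun_prop) (by fun_prop) hind,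
    lintegral_ofReal_exp_mul_of_map_eq_gaussianReal (hlaw 0 u le_rfl hu),
    lintegral_ofReal_exp_mul_of_map_eq_gaussianReal (hlaw u v hu huv),
    ← ENNReal.ofReal_mul (exp_pos _).le, ← exp_add, Real.coe_toNNReal _ (by linarith),
    Real.coe_toNNReal _ (by linarith)]
  ring_nf

lemma IsStdBrownianMotion.lintegral_exp_mul_exp (hW : IsStdBrownianMotion W) (σ : ℝ)
    {u v : ℝ} (hu : 0 ≤ u) (hv : 0 ≤ v) :
    ∫⁻ ω, ENNReal.ofReal (exp (σ * W u ω) * exp (σ * W v ω)) =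
      ENNReal.ofReal (exp (σ ^ 2 * (u + v) / 2 + σ ^ 2 * min u v)) := by
  rcases le_total u v with huv | hvu
  · rw [min_eq_left huv]
    exact hW.lintegral_exp_mul_exp_of_le σ hu huv
  · simp_rw [min_eq_right hvu, add_comm u v, mul_comm (exp (σ * W u _))]
    exact hW.lintegral_exp_mul_exp_of_le σ hv hvu

lemma IsStdBrownianMotion.integral_sq_eq_toReal_setLIntegral_secondMomentKernel
    (hW : IsStdBrownianMotion W) (a b σ : ℝ) {t : ℝ} (ht : 0 ≤ t) :
    ∫ ω, (b * ∫ u in (0 : ℝ)..t, exp (-(a + σ ^ 2 / 2) * u) * exp (σ * W u ω)) ^ 2 =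
      b ^ 2 * (∫⁻ p in Ioc 0 t ×ˢ Ioc 0 t, ENNReal.ofReal (secondMomentKernel a σ p)).toReal := by
  obtain ⟨W', hW'meas, hW'cont, hW'W⟩ := exists_continuous_modification hW.1 hW.2.2.2.2
  set h : ℝ → Ω → ℝ := fun u ω => exp (-(a + σ ^ 2 / 2) * u) * exp (σ * W' u ω)
  have hh : Measurable (uncurry h) := by
    have := measurable_uncurry_of_continuous_of_measurable hW'cont hW'meas
    fun_prop
  have hYh : (fun ω => (b * ∫ u in (0 : ℝ)..t, exp (-(a + σ ^ 2 / 2) * u) * exp (σ * W u ω)) ^ 2)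
      =ᵐ[ℙ] fun ω => b ^ 2 * (∫ u in Ioc 0 t, h u ω) ^ 2 := by
    filter_upwards [hW'W] with ω hω
    simp only [h, hω, intervalIntegral.integral_of_le ht]
    ring
  have hmoment : ∀ p ∈ Ioc 0 t ×ˢ Ioc 0 t,
      ∫⁻ ω, ENNReal.ofReal (h p.1 ω * h p.2 ω) = ENNReal.ofReal (secondMomentKernel a σ p) := by
    rintro ⟨u, v⟩ ⟨hu, hv⟩
    have hsplit : (fun ω => ENNReal.ofReal (h u ω * h v ω)) =ᵐ[ℙ] fun ω =>
        ENNReal.ofReal (exp (-(a + σ ^ 2 / 2) * (u + v))) *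
          ENNReal.ofReal (exp (σ * W u ω) * exp (σ * W v ω)) := by
      filter_upwards [hW'W] with ω hω
      rw [← ENNReal.ofReal_mul (exp_pos _).le]
      simp only [h, hω]
      congr 1
      rw [mul_add, exp_add]
      ring
    rw [lintegral_congr_ae hsplit, lintegral_const_mul' _ _ ENNReal.ofReal_ne_top,
      hW.lintegral_exp_mul_exp σ hu.1.le hv.1.le, ← ENNReal.ofReal_mul (exp_pos _).le,
      ← exp_add, secondMomentKernel]
    ring_nf
  rw [integral_congr_ae hYh, integral_const_mul,
    integral_sq_integral_eq_toReal_lintegral hh (fun _ _ => by positivity)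
      (fun ω => (by have := hW'cont ω; fun_prop : Continuous fun u => h u ω).integrableOn_Ioc),
    Measure.prod_restrict, ← Measure.volume_eq_prod,
    setLIntegral_congr_fun (measurableSet_Ioc.prod measurableSet_Ioc) hmoment]

end BrownianMotion

theorem second_moment_geometric_noise_solution_general
    {Ω : Type*} [MeasureSpace Ω] [IsProbabilityMeasure (ℙ : Measure Ω)]
    (W : ℝ → Ω → ℝ) (hW : IsStdBrownianMotion W) (a b σ : ℝ)
    (ha : σ ^ 2 / 2 < a)
    (Y : ℝ → Ω → ℝ)
    (hY : ∀ t ω, Y t ω =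
      b * ∫ u in (0 : ℝ)..t, Real.exp (-(a + σ ^ 2 / 2) * u) * Real.exp (σ * W u ω)) :
    Tendsto (fun t : ℝ => ∫ ω, (Y t ω) ^ 2) atTop
      (nhds (b ^ 2 / (a * (a - σ ^ 2 / 2)))) := by
  have hmono : Monotone fun t : ℝ => Ioc 0 t ×ˢ Ioc 0 t := fun s t hst =>
    prod_mono (Ioc_subset_Ioc_right hst) (Ioc_subset_Ioc_right hst)
  have hlim := tendsto_setLIntegral_iUnion_of_monotone (μ := volume) hmono
    fun p => ENNReal.ofReal (secondMomentKernel a σ p)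
  rw [iUnion_Ioc_prod_Ioc, lintegral_secondMomentKernel ha] at hlim
  have hpos : 0 ≤ (a * (a - σ ^ 2 / 2))⁻¹ :=
    inv_nonneg.mpr (mul_nonneg (by nlinarith [sq_nonneg σ]) (by linarith))
  replace hlim := (ENNReal.tendsto_toReal ENNReal.ofReal_ne_top).comp hlim
  rw [ENNReal.toReal_ofReal hpos] at hlim
  rw [div_eq_mul_inv]
  refine (hlim.const_mul (b ^ 2)).congr' ?_
  filter_upwards [eventually_ge_atTop 0] with t ht
  simp_rw [hY]
  exact (hW.integral_sq_eq_toReal_setLIntegral_secondMomentKernel a b σ ht).symm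

/-- Steady-state second moment of `Y(t) = b ∫₀^t e^{−(a+σ²/2)u} e^{σ W_u} du` when
`a > σ²/2`: `lim_{t→∞} E[Y(t)²] = b²/(a(a − σ²/2))`. -/
theorem second_moment_geometric_noise_solution
    {Ω : Type*} [MeasureSpace Ω] [IsProbabilityMeasure (ℙ : Measure Ω)]
    (W : ℝ → Ω → ℝ) (hW : IsStdBrownianMotion W) (a b σ : ℝ)
    (hb : 0 < b) (hσ : 0 < σ) (ha : σ ^ 2 / 2 < a)
    (Y : ℝ → Ω → ℝ)
    (hY : ∀ t ω, Y t ω =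
      b * ∫ u in (0 : ℝ)..t, Real.exp (-(a + σ ^ 2 / 2) * u) * Real.exp (σ * W u ω)) :
    Tendsto (fun t : ℝ => ∫ ω, (Y t ω) ^ 2) atTop
      (nhds (b ^ 2 / (a * (a - σ ^ 2 / 2)))) :=
  second_moment_geometric_noise_solution_general W hW a b σ ha Y hY
end
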